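/- For every natural number m, the (m+1) × (m+1) matrix over ℚ (or ℝ) whose entry in row r and column k (with r, k ∈ {0,…,m}) is (r+1) · (k+1)! · (m−k+r)! is invertible; equivalently, its determinant is nonzero. (This follows from the identity det( ((i+j)!)_{0 ≤ i,j ≤ m} ) = Π_{i=0}^{m} (i!)², since the above matrix is obtained from ((i+j)!) by rescaling rows and columns by nonzero constants and reversing the column order.) -/
import Mathlib


open scoped BigOperators

private lemma vand_aux (r n M : ℕ) (h : r ≤ M) :
    ∑ i ∈ Finset.range (M + 1), r.choose i * n.choose i = (r + n).choose r := by
  have h1 : (r + n).choose r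
      = ∑ i ∈ Finset.range (r + 1), r.choose i * n.choose (r - i) := by
    rw [Nat.add_choose_eq, Finset.Nat.sum_antidiagonal_eq_sum_range_succ_mk]
  have h2 : ∑ i ∈ Finset.range (r + 1), r.choose i * n.choose (r - i)
      = ∑ i ∈ Finset.range (r + 1), r.choose i * n.choose i := by
    rw [← Finset.sum_range_reflect]
    apply Finset.sum_congr rfl
    intro i hi
    simp only [Finset.mem_range] at hi
    have hil : i ≤ r := by omega
    have : r + 1 - 1 - i = r - i := by omega
    rw [this, Nat.choose_symm hil, Nat.sub_sub_self hil]
  have h3 : ∑ i ∈ Finset.range (M + 1), r.choose i * n.choose i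
      = ∑ i ∈ Finset.range (r + 1), r.choose i * n.choose i := by
    symm
    apply Finset.sum_subset
    · intro x hx
      simp only [Finset.mem_range] at hx ⊢
      omega
    · intro x _ hx
      simp only [Finset.mem_range] at hx
      rw [Nat.choose_eq_zero_of_lt (by omega)]
      ring
  rw [h3, ← h2, h1]

/-- The `(m+1) × (m+1)` matrix over `ℚ` whose entry in row `r`, column `k` is
`(r+1) · (k+1)! · (m−k+r)!` is invertible: its determinant is nonzero. -/
theorem det_reduction_matrix_ne_zero (m : ℕ) :
    (Matrix.of fun r k : Fin (m + 1) =>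
        ((((r : ℕ) + 1) * ((k : ℕ) + 1).factorial * (m - (k : ℕ) + (r : ℕ)).factorial : ℕ) :
          ℚ)).det ≠ 0 := by
  set A : Matrix (Fin (m + 1)) (Fin (m + 1)) ℚ :=
    Matrix.of fun r i => ((((r : ℕ) + 1) * (r : ℕ).factorial * Nat.choose r i : ℕ) : ℚ) with hA
  set B' : Matrix (Fin (m + 1)) (Fin (m + 1)) ℚ :=
    Matrix.of fun i j => ((((m - (j : ℕ)) + 1).factorial * (j : ℕ).factorial
      * Nat.choose (j : ℕ) (i : ℕ) : ℕ) : ℚ) with hB'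
  set B : Matrix (Fin (m + 1)) (Fin (m + 1)) ℚ := B'.submatrix id Fin.revPerm with hB
  have hrev : ∀ k : Fin (m + 1), ((Fin.revPerm k : Fin (m + 1)) : ℕ) = m - (k : ℕ) := by
    intro k
    simp [Fin.revPerm, Fin.val_rev]
  have hMB : (Matrix.of fun r k : Fin (m + 1) =>
      ((((r : ℕ) + 1) * ((k : ℕ) + 1).factorial * (m - (k : ℕ) + (r : ℕ)).factorial : ℕ) :
        ℚ)) = A * B := by
    ext r k
    rw [Matrix.mul_apply]
    have hk : (k : ℕ) ≤ m := by omega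
    have hr : (r : ℕ) ≤ m := by omega
    have key : ((r : ℕ) + 1) * ((k : ℕ) + 1).factorial * (m - (k : ℕ) + (r : ℕ)).factorial
        = ∑ i ∈ Finset.range (m + 1),
          (((r : ℕ) + 1) * (r : ℕ).factorial * Nat.choose (r : ℕ) i)
          * ((((m - (m - (k : ℕ))) + 1).factorial * (m - (k : ℕ)).factorial
            * Nat.choose (m - (k : ℕ)) i)) := by
      have hmk : m - (m - (k : ℕ)) = (k : ℕ) := by omega
      rw [hmk]
      have : ∑ i ∈ Finset.range (m + 1),
          (((r : ℕ) + 1) * (r : ℕ).factorial * Nat.choose (r : ℕ) i)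
          * ((((k : ℕ)) + 1).factorial * (m - (k : ℕ)).factorial
            * Nat.choose (m - (k : ℕ)) i)
          = (((r : ℕ) + 1) * ((k : ℕ) + 1).factorial)
            * ((r : ℕ).factorial * (m - (k : ℕ)).factorial
              * ∑ i ∈ Finset.range (m + 1),
                Nat.choose (r : ℕ) i * Nat.choose (m - (k : ℕ)) i) := by
        simp only [Finset.mul_sum]
        apply Finset.sum_congr rfl
        intro i _
        ring
      rw [this, vand_aux _ _ _ hr]
      have hfac : (r : ℕ).factorial * (m - (k : ℕ)).factorial
          * ((r : ℕ) + (m - (k : ℕ))).choose (r : ℕ)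
          = ((r : ℕ) + (m - (k : ℕ))).factorial := by
        have := Nat.choose_mul_factorial_mul_factorial
          (show (r : ℕ) ≤ (r : ℕ) + (m - (k : ℕ)) by omega)
        rw [Nat.add_sub_cancel_left] at this
        rw [← this]; ring
      rw [hfac]
      congr 2
      omega
    have : ∀ i : Fin (m + 1), A r i * B i k
        = (((((r : ℕ) + 1) * (r : ℕ).factorial * Nat.choose (r : ℕ) (i : ℕ))
          * ((((m - (m - (k : ℕ))) + 1).factorial * (m - (k : ℕ)).factorial
            * Nat.choose (m - (k : ℕ)) (i : ℕ)) : ℕ) : ℕ) : ℚ) := by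
      intro i
      simp only [hA, hB, hB', Matrix.submatrix_apply, Matrix.of_apply, id]
      rw [hrev k]
      push_cast
      ring
    simp only [Matrix.of_apply]
    rw [Finset.sum_congr rfl fun i _ => this i]
    rw [← Nat.cast_sum]
    rw [key]
    norm_cast
    exact (Fin.sum_univ_eq_sum_range _ _).symm
  rw [hMB, Matrix.det_mul]
  apply mul_ne_zero
  · have hAtri : A.BlockTriangular OrderDual.toDual := by
      intro i j hij
      simp only [OrderDual.toDual_lt_toDual] at hij
      simp only [hA, Matrix.of_apply]
      rw [Nat.choose_eq_zero_of_lt (by exact_mod_cast hij)]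
      simp
    rw [Matrix.det_of_lowerTriangular A hAtri]
    apply Finset.prod_ne_zero_iff.mpr
    intro i _
    simp only [hA, Matrix.of_apply, Nat.choose_self, mul_one, ne_eq, Nat.cast_eq_zero]
    positivity
  · rw [hB, Matrix.det_permute']
    apply mul_ne_zero
    · simp only [ne_eq, Int.cast_eq_zero]
      exact_mod_cast Units.ne_zero _
    · have hBtri : B'.BlockTriangular id := by
        intro i j hij
        simp only [id] at hij
        simp only [hB', Matrix.of_apply]
        rw [Nat.choose_eq_zero_of_lt (by exact_mod_cast hij)]
        simp
      rw [Matrix.det_of_upperTriangular hBtri]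
      apply Finset.prod_ne_zero_iff.mpr
      intro i _
      simp only [hB', Matrix.of_apply, Nat.choose_self, mul_one, ne_eq, Nat.cast_eq_zero]
      positivity
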